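/- Excess empirical risk of the exponential mechanism on the regularized loss (intermediate step in the proof of Theorem 5.3). There is a universal constant c > 0 such that the following holds. Let C ⊆ ℝ^p be a compact convex set containing the origin, with diameter ‖C‖ > 0 and positive Lebesgue measure, and suppose that for every d ∈ τ the map θ ↦ ℓ(θ; d) is convex and L-Lipschitz on C. Fix ε > 0, m with 0 < m ≤ L/‖C‖, and a dataset D of size n. Let L′ = L + m‖C‖ (an upper bound on the Lipschitz constant on C of the regularized loss), and let ν_D be the Gibbs measure on C with density proportional to exp(−(εn/(2L′‖C‖))·(𝓛(θ; D) + (m/2)‖θ‖²)). Then E_{θ ∼ ν_D}[𝓛(θ; D)] − min_{θ ∈ C} 𝓛(θ; D) ≤ c·(Lp‖C‖/(εn) + m‖C‖²). -/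

import Mathlib

open MeasureTheory Real

noncomputable section

/-- ℝ^p as a Euclidean space. -/
abbrev Eu (p : ℕ) := EuclideanSpace ℝ (Fin p)

/-- The Gibbs measure on `C` with inverse temperature `β` for the potential `F`:
the probability measure whose density with respect to Lebesgue measure restricted
to `C` is proportional to `exp (-β * F θ)`. -/
def gibbs {p : ℕ} (C : Set (Eu p)) (β : ℝ) (F : Eu p → ℝ) : Measure (Eu p) :=
  (∫⁻ θ in C, ENNReal.ofReal (Real.exp (-β * F θ)))⁻¹ •
    (volume.restrict C).withDensity fun θ => ENNReal.ofReal (Real.exp (-β * F θ))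

/-- The empirical loss `𝓛(θ; D) = (1/n) ∑ i, ℓ(θ; dᵢ)`. -/
def empLoss {p n : ℕ} {τ : Type*} (ℓ : Eu p → τ → ℝ) (D : Fin n → τ) (θ : Eu p) : ℝ :=
  (1 / (n : ℝ)) * ∑ i, ℓ θ (D i)

/-!
Shrinking `C` towards any `θ₀ ∈ C` by the homothety of ratio `s = 1 - 1/(2p)` maps `C` into
itself and scales volume by `s ^ p ≥ 1/2`, while by convexity it lowers the potential `F` at
each point by at least `(1 - s) (F θ - F θ₀)`. Comparing the Gibbs partition function with its
pull-back under this homothety gives `𝔼[F] ≤ F θ₀ + 2p/β` for every `θ₀ ∈ C`. Since `0 ∈ C`, the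
regularizer costs at most `(m/2) ‖C‖²`, and `m ‖C‖ ≤ L` turns `2p/β` into `O(L p ‖C‖/(ε n))`.
-/

open Module Set
open scoped ENNReal NNReal

theorem ConvexOn.finsetSum {𝕜 E β ι : Type*} [Semiring 𝕜] [PartialOrder 𝕜] [AddCommMonoid E]
    [AddCommMonoid β] [PartialOrder β] [IsOrderedAddMonoid β] [SMul 𝕜 E] [DistribMulAction 𝕜 β]
    {s : Set E} (hs : Convex 𝕜 s) (t : Finset ι) {f : ι → E → β}
    (hf : ∀ i ∈ t, ConvexOn 𝕜 s (f i)) : ConvexOn 𝕜 s fun x => ∑ i ∈ t, f i x := by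
  classical
  induction t using Finset.induction_on with
  | empty => exact ⟨hs, fun _ _ _ _ _ _ _ _ _ => by simp⟩
  | insert a t ha ih =>
    simp only [Finset.sum_insert ha]
    exact (hf a (t.mem_insert_self a)).add (ih fun i hi => hf i (Finset.mem_insert_of_mem hi))

theorem ConvexOn.exp_neg_mul_mul_one_add_le {E : Type*} [AddCommGroup E] [Module ℝ E]
    {C : Set E} {F : E → ℝ} (hF : ConvexOn ℝ C F) {x x₀ : E} (hx : x ∈ C) (hx₀ : x₀ ∈ C)
    {s β : ℝ} (hs₀ : 0 ≤ s) (hs₁ : s ≤ 1) (hβ : 0 ≤ β) :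
    exp (-β * F x) * (1 + β * (1 - s) * (F x - F x₀)) ≤
      exp (-β * F (s • x + (1 - s) • x₀)) := by
  have hconv : F (s • x + (1 - s) • x₀) ≤ s * F x + (1 - s) * F x₀ :=
    hF.2 hx hx₀ hs₀ (by linarith) (by ring)
  calc exp (-β * F x) * (1 + β * (1 - s) * (F x - F x₀))
      ≤ exp (-β * F x) * exp (β * (1 - s) * (F x - F x₀)) := by
        gcongr
        linarith [add_one_le_exp (β * (1 - s) * (F x - F x₀))]
    _ = exp (-β * (s * F x + (1 - s) * F x₀)) := by rw [← exp_add]; ring_nf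
    _ ≤ exp (-β * F (s • x + (1 - s) • x₀)) := exp_le_exp.2 (by nlinarith)

theorem le_two_mul_of_pow_mul_add_le {d : ℕ} {s Z J : ℝ} (hs : 2 * d * (1 - s) = 1)
    (hZ : 0 ≤ Z) (h : s ^ d * (Z + (1 - s) * J) ≤ Z) : J ≤ 2 * d * Z := by
  have hd : (1 : ℝ) ≤ d := by
    rcases Nat.eq_zero_or_pos d with hd | hd
    · simp [hd] at hs
    · exact_mod_cast hd
  have ht₀ : 0 < 1 - s := by nlinarith
  have hbernoulli : 1 - d * (1 - s) ≤ s ^ d := by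
    have := one_add_mul_le_pow (a := s - 1) (by nlinarith) d
    simp only [add_sub_cancel] at this
    linarith
  rcases le_or_gt J 0 with hJ | hJ
  · nlinarith
  · have hcontract : s ^ d * (1 - s) * J ≤ d * (1 - s) * Z := by nlinarith
    have hhalf : (1 - s) * J / 2 ≤ s ^ d * (1 - s) * J := by nlinarith [mul_pos ht₀ hJ]
    refine le_of_mul_le_mul_left ?_ ht₀
    nlinarith

theorem pow_finrank_mul_setIntegral_comp_homothety_le {E : Type*} [NormedAddCommGroup E]
    [NormedSpace ℝ E] [FiniteDimensional ℝ E] [MeasurableSpace E] [BorelSpace E]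
    (μ : Measure E) [μ.IsAddHaarMeasure] {C : Set E} (hC : MeasurableSet C)
    (hconv : Convex ℝ C) {x₀ : E} (hx₀ : x₀ ∈ C) {s : ℝ} (hs₀ : 0 < s) (hs₁ : s ≤ 1)
    {g : E → ℝ} (hg : ∀ x, 0 ≤ g x) (hgi : IntegrableOn g C μ) :
    s ^ finrank ℝ E * ∫ x in C, g (s • x + (1 - s) • x₀) ∂μ ≤ ∫ x in C, g x ∂μ := by
  set T : E → E := fun x => s • x + (1 - s) • x₀
  have hTC : T '' C ⊆ C := by
    rintro _ ⟨x, hx, rfl⟩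
    exact hconv hx hx₀ hs₀.le (by linarith) (by ring)
  have hT' : ∀ x ∈ C, HasFDerivWithinAt T (s • ContinuousLinearMap.id ℝ E) C x :=
    fun x _ => (((hasFDerivAt_id x).const_smul s).add_const _).hasFDerivWithinAt
  have hTinj : InjOn T C := fun a _ b _ hab =>
    smul_right_injective E hs₀.ne' (add_right_cancel hab)
  have hdet : |(s • ContinuousLinearMap.id ℝ E).det| = s ^ finrank ℝ E := by
    simp [ContinuousLinearMap.det, abs_of_pos hs₀]
  calc s ^ finrank ℝ E * ∫ x in C, g (T x) ∂μ = ∫ x in T '' C, g x ∂μ := by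
        rw [integral_image_eq_integral_abs_det_fderiv_smul μ hC hT' hTinj, hdet,
          ← integral_const_mul]
        rfl
    _ ≤ ∫ x in C, g x ∂μ :=
        setIntegral_mono_set hgi (.of_forall fun x => hg x) hTC.eventuallyLE

theorem setIntegral_sub_mul_exp_neg_le {E : Type*} [NormedAddCommGroup E] [NormedSpace ℝ E]
    [FiniteDimensional ℝ E] [MeasurableSpace E] [BorelSpace E] {μ : Measure E}
    [μ.IsAddHaarMeasure] (hd : 0 < finrank ℝ E) {C : Set E} (hC : IsCompact C)
    {F : E → ℝ} (hFc : ContinuousOn F C) (hFcv : ConvexOn ℝ C F) {x₀ : E} (hx₀ : x₀ ∈ C)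
    {β : ℝ} (hβ : 0 < β) :
    ∫ x in C, (F x - F x₀) * exp (-β * F x) ∂μ ≤
      2 * finrank ℝ E / β * ∫ x in C, exp (-β * F x) ∂μ := by
  set d := finrank ℝ E
  set s : ℝ := 1 - 1 / (2 * d)
  set Z := ∫ x in C, exp (-β * F x) ∂μ
  set I := ∫ x in C, (F x - F x₀) * exp (-β * F x) ∂μ
  have hd' : (1 : ℝ) ≤ d := by exact_mod_cast hd
  have hs : 2 * d * (1 - s) = 1 := by simp only [s]; field_simp; ring
  have hs₀ : 0 < s := by
    have : 1 / (2 * (d : ℝ)) < 1 := by rw [div_lt_one (by positivity)]; linarith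
    simp only [s]; linarith
  have hs₁ : s ≤ 1 := by simp only [s]; linarith [show 0 ≤ 1 / (2 * (d : ℝ)) by positivity]
  have hw : ContinuousOn (fun x => exp (-β * F x)) C := by fun_prop
  have hwi : IntegrableOn (fun x => exp (-β * F x)) C μ := hw.integrableOn_compact hC
  have hGi : IntegrableOn (fun x => (F x - F x₀) * exp (-β * F x)) C μ :=
    ((hFc.sub continuousOn_const).mul hw).integrableOn_compact hC
  have hsplit : (fun x => exp (-β * F x) * (1 + β * (1 - s) * (F x - F x₀))) =
      fun x => exp (-β * F x) + (1 - s) * β * ((F x - F x₀) * exp (-β * F x)) := by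
    ext x; ring
  have hTC : MapsTo (fun x => s • x + (1 - s) • x₀) C C := fun x hx =>
    hFcv.1 hx hx₀ hs₀.le (by linarith) (by ring)
  have hcontract : s ^ d * (Z + (1 - s) * (β * I)) ≤ Z :=
    calc s ^ d * (Z + (1 - s) * (β * I))
        = s ^ d * ∫ x in C, exp (-β * F x) * (1 + β * (1 - s) * (F x - F x₀)) ∂μ := by
          rw [hsplit, integral_add hwi (hGi.const_mul _), integral_const_mul]
          ring
      _ ≤ s ^ d * ∫ x in C, exp (-β * F (s • x + (1 - s) • x₀)) ∂μ := by
          refine mul_le_mul_of_nonneg_left (setIntegral_mono_on ?_ ?_ hC.measurableSet fun x hx =>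
            hFcv.exp_neg_mul_mul_one_add_le hx hx₀ hs₀.le hs₁ hβ.le) (by positivity)
          · rw [hsplit]
            exact hwi.add (hGi.const_mul _)
          · exact (hw.comp (by fun_prop) hTC).integrableOn_compact hC
      _ ≤ Z := pow_finrank_mul_setIntegral_comp_homothety_le μ hC.measurableSet hFcv.1 hx₀
          hs₀ hs₁ (fun x => (exp_pos _).le) hwi
  have hZ : 0 ≤ Z := setIntegral_nonneg hC.measurableSet fun x _ => (exp_pos _).le
  rw [div_mul_eq_mul_div, le_div_iff₀ hβ, mul_comm]
  exact le_two_mul_of_pow_mul_add_le hs hZ hcontract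

section Gibbs

variable {p : ℕ} {C : Set (Eu p)} {β : ℝ} {F : Eu p → ℝ}

theorem integral_gibbs (hC : IsCompact C) (hF : ContinuousOn F C) (g : Eu p → ℝ) :
    ∫ θ, g θ ∂gibbs C β F = (∫ θ in C, exp (-β * F θ) * g θ) / ∫ θ in C, exp (-β * F θ) := by
  have hw : ContinuousOn (fun θ => exp (-β * F θ)) C := by fun_prop
  have hZ : ∫⁻ θ in C, ENNReal.ofReal (exp (-β * F θ)) =
      ENNReal.ofReal (∫ θ in C, exp (-β * F θ)) :=
    (ofReal_integral_eq_lintegral_ofReal (hw.integrableOn_compact hC)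
      (.of_forall fun θ => (exp_pos _).le)).symm
  have hmeas : AEMeasurable (fun θ => (exp (-β * F θ)).toNNReal) (volume.restrict C) :=
    measurable_real_toNNReal.comp_aemeasurable (hw.aemeasurable hC.measurableSet)
  rw [gibbs, integral_smul_measure, hZ, ENNReal.toReal_inv,
    ENNReal.toReal_ofReal (setIntegral_nonneg hC.measurableSet fun θ _ => (exp_pos _).le),
    smul_eq_mul, inv_mul_eq_div]
  congr 1
  rw [show (fun θ => ENNReal.ofReal (exp (-β * F θ))) =
      fun θ => ((exp (-β * F θ)).toNNReal : ℝ≥0∞) from rfl,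
    integral_withDensity_eq_integral_smul₀ hmeas]
  refine setIntegral_congr_fun hC.measurableSet fun θ _ => ?_
  simp [NNReal.smul_def, coe_toNNReal _ (exp_pos _).le]

theorem integral_gibbs_mono {g h : Eu p → ℝ} (hC : IsCompact C) (hF : ContinuousOn F C)
    (hg : ContinuousOn g C) (hh : ContinuousOn h C)
    (hgh : ∀ θ ∈ C, g θ ≤ h θ) : ∫ θ, g θ ∂gibbs C β F ≤ ∫ θ, h θ ∂gibbs C β F := by
  have hw : ContinuousOn (fun θ => exp (-β * F θ)) C := by fun_prop
  rw [integral_gibbs hC hF, integral_gibbs hC hF]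
  refine div_le_div_of_nonneg_right (setIntegral_mono_on ((hw.mul hg).integrableOn_compact hC)
    ((hw.mul hh).integrableOn_compact hC) hC.measurableSet fun θ hθ =>
      mul_le_mul_of_nonneg_left (hgh θ hθ) (exp_pos _).le) ?_
  exact setIntegral_nonneg hC.measurableSet fun θ _ => (exp_pos _).le

theorem integral_gibbs_le_of_convexOn (hp : 0 < p) (hC : IsCompact C) (hvol : 0 < volume C)
    (hFc : ContinuousOn F C) (hFcv : ConvexOn ℝ C F) (hβ : 0 < β) {θ₀ : Eu p} (hθ₀ : θ₀ ∈ C) :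
    ∫ θ, F θ ∂gibbs C β F ≤ F θ₀ + 2 * p / β := by
  have hw : ContinuousOn (fun θ => exp (-β * F θ)) C := by fun_prop
  have hwi : IntegrableOn (fun θ => exp (-β * F θ)) C := hw.integrableOn_compact hC
  have hZ : 0 < ∫ θ in C, exp (-β * F θ) := by
    have hsupp : Function.support (fun θ => exp (-β * F θ)) = univ :=
      eq_univ_of_forall fun θ => (exp_pos _).ne'
    rwa [setIntegral_pos_iff_support_of_nonneg_ae (.of_forall fun θ => (exp_pos _).le) hwi,
      hsupp, univ_inter]
  have hsplit : ∫ θ in C, exp (-β * F θ) * F θ =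
      (∫ θ in C, (F θ - F θ₀) * exp (-β * F θ)) + F θ₀ * ∫ θ in C, exp (-β * F θ) := by
    have hexpand : (fun θ => exp (-β * F θ) * F θ) =
        fun θ => (F θ - F θ₀) * exp (-β * F θ) + F θ₀ * exp (-β * F θ) := by
      ext θ; ring
    have hGi : IntegrableOn (fun θ => (F θ - F θ₀) * exp (-β * F θ)) C :=
      ((hFc.sub continuousOn_const).mul hw).integrableOn_compact hC
    rw [hexpand, integral_add hGi (hwi.const_mul _), integral_const_mul]
  have hkey := setIntegral_sub_mul_exp_neg_le (μ := volume) (by simpa using hp) hC hFc hFcv hθ₀ hβ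
  rw [finrank_euclideanSpace_fin] at hkey
  rw [integral_gibbs hC hFc, div_le_iff₀ hZ, hsplit]
  linarith

end Gibbs

section EmpLoss

variable {p n : ℕ} {τ : Type*} {ℓ : Eu p → τ → ℝ} {C : Set (Eu p)}

theorem continuousOn_empLoss (hℓ : ∀ d, ContinuousOn (fun θ => ℓ θ d) C) (D : Fin n → τ) :
    ContinuousOn (empLoss ℓ D) C :=
  continuousOn_const.mul (continuousOn_finsetSum _ fun i _ => hℓ (D i))

theorem convexOn_empLoss (hC : Convex ℝ C) (hℓ : ∀ d, ConvexOn ℝ C fun θ => ℓ θ d)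
    (D : Fin n → τ) : ConvexOn ℝ C (empLoss ℓ D) :=
  (ConvexOn.finsetSum hC _ fun i _ => hℓ (D i)).smul (c := 1 / (n : ℝ)) (by positivity)

end EmpLoss

/-- excess empirical risk of the exponential mechanism on the
regularized loss (intermediate step in the proof of Theorem 5.3). -/
theorem exponential_mechanism_regularized_excess_risk :
    ∃ c : ℝ, 0 < c ∧
      ∀ (p n : ℕ), 1 ≤ p → 1 ≤ n → ∀ (τ : Type) (ℓ : Eu p → τ → ℝ),
      ∀ (C : Set (Eu p)), IsCompact C → Convex ℝ C → (0 : Eu p) ∈ C →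
        0 < Metric.diam C → 0 < volume C →
      ∀ (L : ℝ), 0 < L →
        (∀ d : τ, ConvexOn ℝ C (fun θ => ℓ θ d)) →
        (∀ d : τ, LipschitzOnWith L.toNNReal (fun θ => ℓ θ d) C) →
      ∀ (ε : ℝ), 0 < ε →
      ∀ (m : ℝ), 0 < m → m ≤ L / Metric.diam C →
      ∀ (D : Fin n → τ),
        (∫ θ, empLoss ℓ D θ
            ∂(gibbs C (ε * n / (2 * (L + m * Metric.diam C) * Metric.diam C))
              (fun θ => empLoss ℓ D θ + m / 2 * ‖θ‖ ^ 2))) -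
          sInf (empLoss ℓ D '' C) ≤
        c * (L * p * Metric.diam C / (ε * n) + m * Metric.diam C ^ 2) := by
  refine ⟨8, by norm_num, fun p n hp hn τ ℓ C hC hconv h0C hR hvol L hL hℓ hLip ε hε m hm hmL D =>
    ?_⟩
  set R := Metric.diam C
  set β := ε * n / (2 * (L + m * R) * R)
  have hmR : m * R ≤ L := (le_div_iff₀ hR).1 hmL
  have hβ : 0 < β := by positivity
  have hLc := continuousOn_empLoss (fun d => (hLip d).continuousOn) D
  set F := fun θ : Eu p => empLoss ℓ D θ + m / 2 * ‖θ‖ ^ 2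
  have hFc : ContinuousOn F C := by fun_prop
  have hFcv : ConvexOn ℝ C F :=
    (convexOn_empLoss hconv hℓ D).add
      (((convexOn_norm hconv).pow (fun θ _ => norm_nonneg θ) 2).smul (by positivity))
  have hmean : ∀ θ₀ ∈ C,
      ∫ θ, empLoss ℓ D θ ∂gibbs C β F ≤ empLoss ℓ D θ₀ + (2 * p / β + m / 2 * R ^ 2) := by
    intro θ₀ hθ₀
    have hθ₀R : ‖θ₀‖ ≤ R := by simpa using Metric.dist_le_diam_of_mem hC.isBounded hθ₀ h0C
    calc ∫ θ, empLoss ℓ D θ ∂gibbs C β F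
        ≤ ∫ θ, F θ ∂gibbs C β F :=
          integral_gibbs_mono hC hFc hLc hFc fun θ _ => le_add_of_nonneg_right (by positivity)
      _ ≤ empLoss ℓ D θ₀ + m / 2 * ‖θ₀‖ ^ 2 + 2 * p / β :=
          integral_gibbs_le_of_convexOn hp hC hvol hFc hFcv hβ hθ₀
      _ ≤ empLoss ℓ D θ₀ + (2 * p / β + m / 2 * R ^ 2) := by
          linarith [show m / 2 * ‖θ₀‖ ^ 2 ≤ m / 2 * R ^ 2 by gcongr]
  have hinf := le_csInf ((nonempty_of_mem h0C).image (empLoss ℓ D)) (by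
    rintro _ ⟨θ, hθ, rfl⟩
    exact sub_le_iff_le_add.2 (hmean θ hθ))
  have htemp : 2 * p / β ≤ 8 * (L * p * R / (ε * n)) :=
    calc 2 * p / β = 4 * p * (L + m * R) * R / (ε * n) := by simp only [β]; field_simp; ring
      _ ≤ 4 * p * (2 * L) * R / (ε * n) := by gcongr; linarith
      _ = 8 * (L * p * R / (ε * n)) := by ring
  linarith [show 0 ≤ m * R ^ 2 by positivity]

end
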